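/- arXiv:1806.03781 — 3 statements merged into one kernel-verified Lean document; each statement's English description precedes it below -/
import Mathlib

section
/- Consider the noisy Hegselmann–Krause update x_i(t+1) = clamp to [0,1] of (x̃_i(t) + I_{i∈S} ξ_i(t+1)), where the noises satisfy |ξ_i(t)| ≤ δ almost surely with 2δ ≤ ε. If at some time T the diameter satisfies d_V(T) ≤ ε, then almost surely d_V(t) ≤ 2δ ≤ ε for all t > T. -/
open scoped Classical

/-- Clamp a real number into `[0,1]`. -/
noncomputable def clamp (y : ℝ) : ℝ := max 0 (min 1 y)

/-- The Hegselmann–Krause local average of agent `i`. -/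
noncomputable def hkAvg {n : ℕ} (ε : ℝ) (x : Fin n → ℝ) (i : Fin n) : ℝ :=
  (∑ j ∈ Finset.univ.filter fun j => |x j - x i| ≤ ε, x j) /
    ((Finset.univ.filter fun j => |x j - x i| ≤ ε).card : ℝ)

/-! Once the diameter is at most `ε`, every agent sees every other agent, so all agents
compute the same average and the next states differ only through the noises, hence by at
most `2δ ≤ ε` (clamping is 1-Lipschitz). The diameter thus stays at most `ε`, and the argument
repeats forever. -/

theorem abs_clamp_sub_clamp_le (u v : ℝ) : |clamp u - clamp v| ≤ |u - v| :=
  calc |clamp u - clamp v| = |max (min 1 u) 0 - max (min 1 v) 0| := by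
        simp only [clamp, max_comm (0 : ℝ)]
    _ ≤ |min 1 u - min 1 v| := abs_max_sub_max_le_abs _ _ _
    _ ≤ |u - v| := (abs_min_sub_min_le_max 1 u 1 v).trans (by simp)

section

variable {n : ℕ} {ε δ : ℝ} {x : Fin n → ℝ}

theorem hkAvg_eq_mean_of_abs_sub_le (hx : ∀ i j, |x i - x j| ≤ ε) (i : Fin n) :
    hkAvg ε x i = (∑ j, x j) / n := by
  have hall : (Finset.univ.filter fun j => |x j - x i| ≤ ε) = Finset.univ :=
    Finset.filter_true_of_mem fun j _ => hx j i
  simp [hkAvg, hall]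

theorem abs_clamp_hkAvg_add_sub_le {η : Fin n → ℝ} (hx : ∀ i j, |x i - x j| ≤ ε)
    (hη : ∀ i, |η i| ≤ δ) (i j : Fin n) :
    |clamp (hkAvg ε x i + η i) - clamp (hkAvg ε x j + η j)| ≤ 2 * δ :=
  calc |clamp (hkAvg ε x i + η i) - clamp (hkAvg ε x j + η j)|
      ≤ |(hkAvg ε x i + η i) - (hkAvg ε x j + η j)| := abs_clamp_sub_clamp_le _ _
    _ = |η i - η j| := by
        rw [hkAvg_eq_mean_of_abs_sub_le hx i, hkAvg_eq_mean_of_abs_sub_le hx j, add_sub_add_left_eq_sub]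
    _ ≤ |η i| + |η j| := abs_sub _ _
    _ ≤ 2 * δ := by linarith [hη i, hη j]

end

theorem hk_diam_le_two_delta_forever_general (n : ℕ) (ε δ : ℝ)
    (hδε : 2 * δ ≤ ε)
    (S : Finset (Fin n)) (x : ℕ → Fin n → ℝ) (ξ : ℕ → Fin n → ℝ)
    (hξ : ∀ t i, |ξ t i| ≤ δ)
    (hupd : ∀ t i, x (t + 1) i = clamp (hkAvg ε (x t) i + if i ∈ S then ξ (t + 1) i else 0))
    (T : ℕ) (hT : ∀ i j, |x T i - x T j| ≤ ε) :
    ∀ t, T < t → ∀ i j, |x t i - x t j| ≤ 2 * δ := by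
  have hnoise : ∀ t i, |(if i ∈ S then ξ t i else 0)| ≤ δ := fun t i => by
    split_ifs
    · exact hξ t i
    · simpa using (abs_nonneg _).trans (hξ t i)
  have hstep : ∀ t, (∀ i j, |x t i - x t j| ≤ ε) →
      ∀ i j, |x (t + 1) i - x (t + 1) j| ≤ 2 * δ := fun t ht i j => by
    rw [hupd, hupd]
    exact abs_clamp_hkAvg_add_sub_le ht (hnoise (t + 1)) i j
  intro t ht
  induction t, ht using Nat.le_induction with
  | base => exact hstep T hT
  | succ t _ ih => exact hstep t fun i j => (ih i j).trans hδε

/-- In the noisy HK model with noises bounded by `δ ≤ ε/2`, once the diameter is at most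
`ε` at some time `T`, the diameter stays at most `2δ` for all later times. -/
theorem hk_diam_le_two_delta_forever (n : ℕ) (hn : 0 < n) (ε δ : ℝ)
    (hδ : 0 < δ) (hδε : 2 * δ ≤ ε)
    (S : Finset (Fin n)) (x : ℕ → Fin n → ℝ) (ξ : ℕ → Fin n → ℝ)
    (hξ : ∀ t i, |ξ t i| ≤ δ)
    (hx0 : ∀ i, x 0 i ∈ Set.Icc (0:ℝ) 1)
    (hupd : ∀ t i, x (t + 1) i = clamp (hkAvg ε (x t) i + if i ∈ S then ξ (t + 1) i else 0))
    (T : ℕ) (hT : ∀ i j, |x T i - x T j| ≤ ε) :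
    ∀ t, T < t → ∀ i j, |x t i - x t j| ≤ 2 * δ :=
  hk_diam_le_two_delta_forever_general n ε δ hδε S x ξ hξ hupd T hT
end

section
/- In the noise-free Hegselmann–Krause model (S = ∅), for every initial condition x(0) ∈ [0,1]^n there exist a finite time T₀ and limit values x_i* ∈ [0,1] such that x_i(t) = x_i* for all t ≥ T₀ and all i, and moreover for any pair i, j either x_i* = x_j* or |x_i* − x_j*| > ε. -/
open scoped Classical

/-!
The update preserves the order of the opinions, and a group of agents whose neighbourhoods stay
inside the group evolves on its own: its minimum is nondecreasing and bounded, hence converges.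
Such a group either shows, at some time, a gap wider than `ε` above one of its opinions, and then
the two sides of the gap never meet again, so we recurse on both; or it stays `ε`-chained forever.
In the chained case an agent with a neighbour at height `d` above the minimum `m` is pulled to at
least `m + d / n`; by induction along the initial order every opinion converges to the limit of
the minimum. Once all opinions are within `ε` of each other they agree after one step and stay
put. Finally, at a fixed point of the update the smallest opinion having a distinct neighbour would
lie strictly below its own average, so distinct limit opinions are more than `ε` apart.
-/

open Finset Filter Topology
open scoped BigOperators

section Average

variable {ι : Type*} {f : ι → ℝ}

lemma sum_mul_card_le_sum_mul_card {S T : Finset ι} (h : ∀ a ∈ S, ∀ b ∈ T, f a ≤ f b) :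
    (∑ a ∈ S, f a) * #T ≤ (∑ b ∈ T, f b) * #S := by
  calc (∑ a ∈ S, f a) * #T = ∑ a ∈ S, ∑ _b ∈ T, f a := by simp [sum_mul, mul_comm]
    _ ≤ ∑ a ∈ S, ∑ b ∈ T, f b := sum_le_sum fun a ha => sum_le_sum fun b hb => h a ha b hb
    _ = (∑ b ∈ T, f b) * #S := by rw [sum_comm]; simp [sum_mul, mul_comm]

lemma add_div_card_le_expect {S : Finset ι} {m : ℝ} (hm : ∀ k ∈ S, m ≤ f k) {j : ι}
    (hj : j ∈ S) : m + (f j - m) / #S ≤ 𝔼 k ∈ S, f k := by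
  have hS : (0 : ℝ) < #S := by exact_mod_cast card_pos.mpr ⟨j, hj⟩
  have hsum : f j - m ≤ ∑ k ∈ S, (f k - m) :=
    single_le_sum (f := fun k => f k - m) (fun k hk => sub_nonneg.mpr (hm k hk)) hj
  rw [expect_eq_sum_div_card, le_div_iff₀ hS, add_mul, div_mul_cancel₀ _ hS.ne']
  simp only [sum_sub_distrib, sum_const, nsmul_eq_mul] at hsum
  linarith

lemma expect_le_expect_of_sdiff [DecidableEq ι] {A B : Finset ι} (hA : A.Nonempty)
    (hB : B.Nonempty) (hAB : ∀ a ∈ A \ B, ∀ b ∈ B, f a ≤ f b)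
    (hBA : ∀ a ∈ A, ∀ b ∈ B \ A, f a ≤ f b) :
    𝔼 a ∈ A, f a ≤ 𝔼 b ∈ B, f b := by
  rw [expect_eq_sum_div_card, expect_eq_sum_div_card,
    div_le_div_iff₀ (by simpa using hA.card_pos) (by simpa using hB.card_pos),
    ← sum_inter_add_sum_sdiff A B, ← sum_inter_add_sum_sdiff B A, inter_comm B A,
    ← card_inter_add_card_sdiff A B, ← card_inter_add_card_sdiff B A, inter_comm B A]
  have h₁ := sum_mul_card_le_sum_mul_card (S := A \ B) (T := B \ A) fun a ha b hb =>
    hAB a ha b (Finset.mem_sdiff.mp hb).1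
  have h₂ := sum_mul_card_le_sum_mul_card (S := A \ B) (T := A ∩ B) fun a ha b hb =>
    hAB a ha b (mem_inter.mp hb).2
  have h₃ := sum_mul_card_le_sum_mul_card (S := A ∩ B) (T := B \ A) fun a ha b hb =>
    hBA a (mem_inter.mp ha).1 b hb
  push_cast
  linarith

end Average

noncomputable def hkNbhd {n : ℕ} (ε : ℝ) (y : Fin n → ℝ) (i : Fin n) : Finset (Fin n) :=
  univ.filter fun j => |y j - y i| ≤ ε

def IsNbhdClosed {n : ℕ} (ε : ℝ) (y : Fin n → ℝ) (G : Finset (Fin n)) : Prop :=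
  ∀ i ∈ G, hkNbhd ε y i ⊆ G

def IsChained {n : ℕ} (ε : ℝ) (y : Fin n → ℝ) (G : Finset (Fin n)) : Prop :=
  ∀ i ∈ G, ∀ j ∈ G, y i < y j → ∃ k ∈ G, y i < y k ∧ y k ≤ y i + ε

section Configuration

variable {n : ℕ} {ε c : ℝ} {y : Fin n → ℝ} {G : Finset (Fin n)} {i j k : Fin n}

@[simp]
lemma mem_hkNbhd : j ∈ hkNbhd ε y i ↔ |y j - y i| ≤ ε := by
  simp [hkNbhd]

lemma self_mem_hkNbhd (hε : 0 ≤ ε) : i ∈ hkNbhd ε y i := by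
  simpa using hε

lemma hkAvg_eq_expect : hkAvg ε y i = 𝔼 j ∈ hkNbhd ε y i, y j := by
  rw [expect_eq_sum_div_card]
  rfl

lemma hkAvg_le (hε : 0 ≤ ε) (h : ∀ j ∈ hkNbhd ε y i, y j ≤ c) : hkAvg ε y i ≤ c := by
  rw [hkAvg_eq_expect]
  exact expect_le ⟨i, self_mem_hkNbhd hε⟩ h

lemma le_hkAvg (hε : 0 ≤ ε) (h : ∀ j ∈ hkNbhd ε y i, c ≤ y j) : c ≤ hkAvg ε y i := by
  rw [hkAvg_eq_expect]
  exact le_expect ⟨i, self_mem_hkNbhd hε⟩ h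

lemma lt_hkAvg (hε : 0 ≤ ε) (h : ∀ j ∈ hkNbhd ε y i, c < y j) : c < hkAvg ε y i := by
  rw [hkAvg_eq_expect]
  exact lt_expect (fun j hj => (h j hj).le) ⟨i, self_mem_hkNbhd hε, h i (self_mem_hkNbhd hε)⟩

lemma hkAvg_mono (hε : 0 ≤ ε) (hij : y i ≤ y j) : hkAvg ε y i ≤ hkAvg ε y j := by
  simp only [hkAvg_eq_expect]
  refine expect_le_expect_of_sdiff ⟨i, self_mem_hkNbhd hε⟩ ⟨j, self_mem_hkNbhd hε⟩ ?_ ?_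
  · intro a ha b hb
    simp only [Finset.mem_sdiff, mem_hkNbhd, abs_le] at ha hb
    by_contra! hba
    exact ha.2 ⟨by linarith, by linarith⟩
  · intro a ha b hb
    simp only [Finset.mem_sdiff, mem_hkNbhd, abs_le] at ha hb
    by_contra! hba
    exact hb.2 ⟨by linarith, by linarith⟩

lemma hkNbhd_eq_of_forall_abs_sub_le (hG : IsNbhdClosed ε y G)
    (hcl : ∀ a ∈ G, ∀ b ∈ G, |y b - y a| ≤ ε) (hi : i ∈ G) : hkNbhd ε y i = G :=
  (hG i hi).antisymm fun j hj => mem_hkNbhd.mpr (hcl i hi j hj)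

lemma le_inf'_add_mul_hkAvg (hG : IsNbhdClosed ε y G) (hne : G.Nonempty) (hi : i ∈ G)
    (hk : k ∈ hkNbhd ε y i) : y k ≤ G.inf' hne y + n * (hkAvg ε y i - G.inf' hne y) := by
  set m := G.inf' hne y
  set N := hkNbhd ε y i
  have hN : (0 : ℝ) < #N := by exact_mod_cast card_pos.mpr ⟨k, hk⟩
  have hNn : (#N : ℝ) ≤ n := by exact_mod_cast (card_le_univ N).trans_eq (Fintype.card_fin n)
  have hpull : m + (y k - m) / #N ≤ hkAvg ε y i := by
    rw [hkAvg_eq_expect]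
    exact add_div_card_le_expect (fun l hl => inf'_le _ (hG i hi hl)) hk
  have hgain : 0 ≤ (y k - m) / #N := div_nonneg (sub_nonneg.mpr (inf'_le _ (hG i hi hk))) hN.le
  calc y k = m + #N * ((y k - m) / #N) := by field_simp; ring
    _ ≤ m + n * ((y k - m) / #N) := by gcongr
    _ ≤ m + n * (hkAvg ε y i - m) := by gcongr; linarith

lemma eq_or_lt_abs_sub_of_hkAvg_eq (hfix : ∀ i, hkAvg ε y i = y i) (i j : Fin n) :
    y i = y j ∨ ε < |y i - y j| := by
  by_contra! h
  set A := univ.filter fun a => ∃ b ∈ hkNbhd ε y a, y a < y b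
  have hA : A.Nonempty := by
    rcases h.1.lt_or_gt with hij | hji
    · exact ⟨i, mem_filter.mpr ⟨mem_univ i, j, by rw [mem_hkNbhd, abs_sub_comm]; exact h.2, hij⟩⟩
    · exact ⟨j, mem_filter.mpr ⟨mem_univ j, i, by simpa using h.2, hji⟩⟩
  obtain ⟨a, haA, hmin⟩ := exists_min_image A y hA
  obtain ⟨b, hb, hab⟩ := (mem_filter.mp haA).2
  have : y a < hkAvg ε y a := by
    rw [hkAvg_eq_expect]
    refine lt_expect (fun k hk => ?_) ⟨b, hb, hab⟩
    by_contra! hka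
    have hak : a ∈ hkNbhd ε y k := by rw [mem_hkNbhd, abs_sub_comm]; exact mem_hkNbhd.mp hk
    exact hka.not_ge (hmin k (mem_filter.mpr ⟨mem_univ k, a, hak, hka⟩))
  linarith [hfix a]

lemma le_iff_le_of_mem_hkNbhd (hgap : ∀ j ∈ G, y j ≤ c ∨ c + ε < y j) (hj : j ∈ G)
    (hk : k ∈ G) (hjk : k ∈ hkNbhd ε y j) : y k ≤ c ↔ y j ≤ c := by
  rw [mem_hkNbhd, abs_le] at hjk
  rcases hgap j hj with hj' | hj' <;> rcases hgap k hk with hk' | hk' <;>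
    constructor <;> intro <;> linarith

lemma hkAvg_le_iff_of_gap (hε : 0 ≤ ε) (hG : IsNbhdClosed ε y G)
    (hgap : ∀ j ∈ G, y j ≤ c ∨ c + ε < y j) (hj : j ∈ G) :
    (hkAvg ε y j ≤ c ↔ y j ≤ c) ∧ (hkAvg ε y j ≤ c ∨ c + ε < hkAvg ε y j) := by
  by_cases hjc : y j ≤ c
  · have : hkAvg ε y j ≤ c :=
      hkAvg_le hε fun k hk => (le_iff_le_of_mem_hkNbhd hgap hj (hG j hj hk) hk).mpr hjc
    exact ⟨iff_of_true this hjc, Or.inl this⟩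
  · have : c + ε < hkAvg ε y j := lt_hkAvg hε fun k hk =>
      (hgap k (hG j hj hk)).resolve_left fun hkc =>
        hjc ((le_iff_le_of_mem_hkNbhd hgap hj (hG j hj hk) hk).mp hkc)
    exact ⟨iff_of_false (by linarith) hjc, Or.inr this⟩

end Configuration

section Trajectory

variable {n : ℕ} {ε : ℝ} {x : ℕ → Fin n → ℝ} {G : Finset (Fin n)}

lemma trajectory_le (hε : 0 ≤ ε) (hx : ∀ t i, x (t + 1) i = hkAvg ε (x t) i) {b : ℝ}
    (h0 : ∀ i, x 0 i ≤ b) : ∀ t i, x t i ≤ b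
  | 0 => h0
  | t + 1 => fun i => (hx t i).trans_le (hkAvg_le hε fun j _ => trajectory_le hε hx h0 t j)

lemma le_trajectory (hε : 0 ≤ ε) (hx : ∀ t i, x (t + 1) i = hkAvg ε (x t) i) {a : ℝ}
    (h0 : ∀ i, a ≤ x 0 i) : ∀ t i, a ≤ x t i
  | 0 => h0
  | t + 1 => fun i =>
    (le_hkAvg hε fun j _ => le_trajectory hε hx h0 t j).trans_eq (hx t i).symm

lemma trajectory_mono (hε : 0 ≤ ε) (hx : ∀ t i, x (t + 1) i = hkAvg ε (x t) i) {i j : Fin n}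
    (h0 : x 0 i ≤ x 0 j) : ∀ t, x t i ≤ x t j
  | 0 => h0
  | t + 1 => by rw [hx, hx]; exact hkAvg_mono hε (trajectory_mono hε hx h0 t)

lemma mem_and_le_iff_of_gap (hε : 0 ≤ ε) (hx : ∀ t i, x (t + 1) i = hkAvg ε (x t) i)
    {t : ℕ} {c : ℝ} (hG : ∀ s ≥ t, IsNbhdClosed ε (x s) G)
    (hgap : ∀ j ∈ G, x t j ≤ c ∨ c + ε < x t j) :
    ∀ s ≥ t, ∀ j ∈ G, ∀ k ∈ hkNbhd ε (x s) j, k ∈ G ∧ (x t k ≤ c ↔ x t j ≤ c) := by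
  have hpers : ∀ s ≥ t, ∀ j ∈ G, (x s j ≤ c ↔ x t j ≤ c) ∧ (x s j ≤ c ∨ c + ε < x s j) := by
    intro s hs
    induction s, hs using Nat.le_induction with
    | base => exact fun j hj => ⟨Iff.rfl, hgap j hj⟩
    | succ s hs ih =>
      intro j hj
      have hstep := hkAvg_le_iff_of_gap hε (hG s hs) (fun k hk => (ih k hk).2) hj
      rw [hx]
      exact ⟨hstep.1.trans (ih j hj).1, hstep.2⟩
  intro s hs j hj k hk
  have hkG := hG s hs j hj hk
  refine ⟨hkG, ?_⟩
  rw [← (hpers s hs k hkG).1, ← (hpers s hs j hj).1]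
  exact le_iff_le_of_mem_hkNbhd (fun l hl => (hpers s hs l hl).2) hj hkG hk

lemma tendsto_of_forall_lt_tendsto (hε : 0 ≤ ε) (hx : ∀ t i, x (t + 1) i = hkAvg ε (x t) i)
    (hne : G.Nonempty) (hG : ∀ t, IsNbhdClosed ε (x t) G) (hch : ∀ t, IsChained ε (x t) G)
    {l : ℝ} (hm : Tendsto (fun t => G.inf' hne (x t)) atTop (𝓝 l)) {i : Fin n} (hi : i ∈ G)
    (ih : ∀ j ∈ G, x 0 j < x 0 i → Tendsto (fun t => x t j) atTop (𝓝 l)) :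
    Tendsto (fun t => x t i) atTop (𝓝 l) := by
  set m := fun t => G.inf' hne (x t)
  have hlow : ∀ t, m t ≤ x t i := fun t => inf'_le _ hi
  by_cases hB : (G.filter fun j => x 0 j < x 0 i).Nonempty
  · obtain ⟨i', hi'B, hmax⟩ := exists_max_image _ (x 0) hB
    obtain ⟨hi'G, hi'i⟩ := mem_filter.mp hi'B
    have h' := ih i' hi'G hi'i
    have hup : ∀ t, x t i ≤ max (x t i') (m t + n * (x (t + 1) i' - m t)) := by
      intro t
      rcases le_or_gt (x t i) (x t i') with h | h
      · exact le_max_of_le_left h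
      obtain ⟨k, hkG, hk, hkε⟩ := hch t i' hi'G i hi h
      have hik : x t i ≤ x t k := by
        by_contra! hki
        have h0 : x 0 k < x 0 i :=
          lt_of_not_ge fun h0 => hki.not_ge (trajectory_mono hε hx h0 t)
        exact hk.not_ge (trajectory_mono hε hx (hmax k (mem_filter.mpr ⟨hkG, h0⟩)) t)
      have hki' : k ∈ hkNbhd ε (x t) i' := by
        rw [mem_hkNbhd, abs_le]
        constructor <;> linarith
      rw [hx t i']
      exact le_max_of_le_right (hik.trans (le_inf'_add_mul_hkAvg (hG t) hne hi'G hki'))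
    have hlim :
        Tendsto (fun t => max (x t i') (m t + n * (x (t + 1) i' - m t))) atTop (𝓝 l) := by
      simpa using
        h'.max (hm.add (((h'.comp (tendsto_add_atTop_nat 1)).sub hm).const_mul (n : ℝ)))
    exact tendsto_of_tendsto_of_tendsto_of_le_of_le hm hlim hlow hup
  · have hmin : ∀ j ∈ G, x 0 i ≤ x 0 j := fun j hj =>
      not_lt.mp fun hji => hB ⟨j, mem_filter.mpr ⟨hj, hji⟩⟩
    have : (fun t => x t i) = m := funext fun t =>
      le_antisymm (le_inf' _ _ fun j hj => trajectory_mono hε hx (hmin j hj) t) (hlow t)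
    rwa [this]

lemma exists_tendsto_of_isChained (hε : 0 ≤ ε) (hx : ∀ t i, x (t + 1) i = hkAvg ε (x t) i)
    (hne : G.Nonempty) (hG : ∀ t, IsNbhdClosed ε (x t) G) (hch : ∀ t, IsChained ε (x t) G) :
    ∃ l, ∀ i ∈ G, Tendsto (fun t => x t i) atTop (𝓝 l) := by
  set m := fun t => G.inf' hne (x t)
  have hm_mono : Monotone m := monotone_nat_of_le_succ fun t => le_inf' _ _ fun k hk =>
    (le_hkAvg hε fun j hj => inf'_le _ (hG t k hk hj)).trans_eq (hx t k).symm
  obtain ⟨i₀, hi₀⟩ := hne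
  have hm_bdd : BddAbove (Set.range m) :=
    ⟨univ.sup' ⟨i₀, mem_univ _⟩ (x 0), Set.forall_mem_range.mpr fun t => (inf'_le _ hi₀).trans
      (trajectory_le hε hx (fun i => le_sup' (x 0) (mem_univ i)) t i₀)⟩
  have hwf := Finite.wellFounded_of_trans_of_irrefl fun a b : Fin n => x 0 a < x 0 b
  refine ⟨⨆ t, m t, fun i => ?_⟩
  induction i using hwf.induction with
  | _ i ih =>
    exact fun hi => tendsto_of_forall_lt_tendsto hε hx _ hG hch
      (tendsto_atTop_ciSup hm_mono hm_bdd) hi fun j hj hji => ih j hji hj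

lemma eventually_stationary_of_tendsto (hε : 0 < ε)
    (hx : ∀ t i, x (t + 1) i = hkAvg ε (x t) i) (hG : ∀ᶠ t in atTop, IsNbhdClosed ε (x t) G)
    {l : ℝ} (hl : ∀ i ∈ G, Tendsto (fun t => x t i) atTop (𝓝 l)) :
    ∀ᶠ t in atTop, ∀ i ∈ G, x (t + 1) i = x t i := by
  have hclose : ∀ᶠ t in atTop, ∀ i ∈ G, |x t i - l| < ε / 2 :=
    (eventually_all_finset G).mpr fun i hi => by
      simpa [Real.dist_eq] using Metric.tendsto_nhds.mp (hl i hi) (ε / 2) (half_pos hε)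
  have hcons : ∀ᶠ t in atTop, ∀ i ∈ G, x (t + 1) i = 𝔼 j ∈ G, x t j := by
    filter_upwards [hG, hclose] with t hGt hct i hi
    refine (hx t i).trans ?_
    rw [hkAvg_eq_expect, hkNbhd_eq_of_forall_abs_sub_le hGt _ hi]
    intro a ha b hb
    have hla := abs_lt.mp (hct a ha)
    have hlb := abs_lt.mp (hct b hb)
    rw [abs_le]
    constructor <;> linarith
  have hnext : ∀ᶠ t in atTop, ∀ i ∈ G, x (t + 1 + 1) i = x (t + 1) i := by
    filter_upwards [hcons, (tendsto_add_atTop_nat 1).eventually hcons] with t ht ht' i hi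
    rw [ht' i hi, expect_congr rfl ht, expect_const ⟨i, hi⟩, ht i hi]
  rw [← map_add_atTop_eq_nat 1, eventually_map]
  exact hnext

lemma eventually_stationary_of_isChained (hε : 0 < ε)
    (hx : ∀ t i, x (t + 1) i = hkAvg ε (x t) i) (hG : ∀ᶠ t in atTop, IsNbhdClosed ε (x t) G)
    (hch : ∀ᶠ t in atTop, IsChained ε (x t) G) :
    ∀ᶠ t in atTop, ∀ i ∈ G, x (t + 1) i = x t i := by
  rcases G.eq_empty_or_nonempty with rfl | hne
  · simp
  obtain ⟨T, hT⟩ := eventually_atTop.mp (hG.and hch)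
  obtain ⟨l, hl⟩ := exists_tendsto_of_isChained (x := fun t => x (t + T)) hε.le
    (fun t i => by rw [Nat.add_right_comm]; exact hx _ i) hne
    (fun t => (hT _ (Nat.le_add_left T t)).1) (fun t => (hT _ (Nat.le_add_left T t)).2)
  exact eventually_stationary_of_tendsto hε hx hG fun i hi =>
    (tendsto_add_atTop_iff_nat T).mp (hl i hi)

theorem eventually_stationary_of_isNbhdClosed (hε : 0 < ε)
    (hx : ∀ t i, x (t + 1) i = hkAvg ε (x t) i) (G : Finset (Fin n))
    (hG : ∀ᶠ t in atTop, IsNbhdClosed ε (x t) G) :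
    ∀ᶠ t in atTop, ∀ i ∈ G, x (t + 1) i = x t i := by
  induction G using Finset.strongInduction with
  | H G ih =>
  by_cases hch : ∀ᶠ t in atTop, IsChained ε (x t) G
  · exact eventually_stationary_of_isChained hε hx hG hch
  obtain ⟨T, hT⟩ := eventually_atTop.mp hG
  obtain ⟨t, htT, hgap⟩ := frequently_atTop.mp (not_eventually.mp hch) T
  unfold IsChained at hgap
  push Not at hgap
  obtain ⟨i, hi, j, hj, hij, habove⟩ := hgap
  have hside := mem_and_le_iff_of_gap (c := x t i) hε.le hx (fun s hs => hT s (htT.trans hs))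
    fun k hk => (le_or_gt _ _).imp_right (habove k hk)
  have h₁ := ih (G.filter (x t · ≤ x t i)) (filter_ssubset.mpr ⟨j, hj, hij.not_ge⟩) <|
    eventually_atTop.mpr ⟨t, fun s hs a ha b hb => by
      obtain ⟨haG, hai⟩ := mem_filter.mp ha
      obtain ⟨hbG, hba⟩ := hside s hs a haG b hb
      exact mem_filter.mpr ⟨hbG, hba.mpr hai⟩⟩
  have h₂ := ih (G.filter (¬ x t · ≤ x t i)) (filter_ssubset.mpr ⟨i, hi, not_not.mpr le_rfl⟩) <|
    eventually_atTop.mpr ⟨t, fun s hs a ha b hb => by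
      obtain ⟨haG, hai⟩ := mem_filter.mp ha
      obtain ⟨hbG, hba⟩ := hside s hs a haG b hb
      exact mem_filter.mpr ⟨hbG, mt hba.mp hai⟩⟩
  filter_upwards [h₁, h₂] with s h₁ h₂ k hk
  by_cases hki : x t k ≤ x t i
  · exact h₁ k (mem_filter.mpr ⟨hk, hki⟩)
  · exact h₂ k (mem_filter.mpr ⟨hk, hki⟩)

end Trajectory

theorem hk_noise_free_convergence_general (n : ℕ) (ε : ℝ) (hε : 0 < ε)
    (x : ℕ → Fin n → ℝ) (hx0 : ∀ i, x 0 i ∈ Set.Icc (0:ℝ) 1)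
    (hupd : ∀ t i, x (t + 1) i = hkAvg ε (x t) i) :
    ∃ T₀ : ℕ, ∃ xs : Fin n → ℝ, (∀ i, xs i ∈ Set.Icc (0:ℝ) 1) ∧
      (∀ t, T₀ ≤ t → ∀ i, x t i = xs i) ∧
      ∀ i j, xs i = xs j ∨ ε < |xs i - xs j| := by
  obtain ⟨T₀, hT₀⟩ := eventually_atTop.mp <| eventually_stationary_of_isNbhdClosed hε hupd univ
    (Eventually.of_forall fun _ _ _ => subset_univ _)
  have hconst : ∀ t ≥ T₀, x t = x T₀ := by
    intro t ht
    induction t, ht using Nat.le_induction with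
    | base => rfl
    | succ t ht ih => funext i; rw [hT₀ t ht i (mem_univ i), ih]
  refine ⟨T₀, x T₀, fun i => ⟨le_trajectory hε.le hupd (fun i => (hx0 i).1) T₀ i,
    trajectory_le hε.le hupd (fun i => (hx0 i).2) T₀ i⟩, fun t ht i => by rw [hconst t ht], ?_⟩
  refine eq_or_lt_abs_sub_of_hkAvg_eq fun i => ?_
  rw [← hupd, hconst (T₀ + 1) (Nat.le_succ T₀)]

/-- The noise-free HK model converges in finite time to fixed values, and any two limit
values either coincide or are more than `ε` apart. -/
theorem hk_noise_free_convergence (n : ℕ) (hn : 0 < n) (ε : ℝ) (hε : 0 < ε)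
    (x : ℕ → Fin n → ℝ) (hx0 : ∀ i, x 0 i ∈ Set.Icc (0:ℝ) 1)
    (hupd : ∀ t i, x (t + 1) i = hkAvg ε (x t) i) :
    ∃ T₀ : ℕ, ∃ xs : Fin n → ℝ, (∀ i, xs i ∈ Set.Icc (0:ℝ) 1) ∧
      (∀ t, T₀ ≤ t → ∀ i, x t i = xs i) ∧
      ∀ i j, xs i = xs j ∨ ε < |xs i - xs j| :=
  hk_noise_free_convergence_general n ε hε x hx0 hupd
end

section
/- In the HK model, let m(t) be an agent attaining the minimum opinion at time t and K(t) = max number of agents within distance ε of m(t) (agents relabeled so x_1(t) ≤ … ≤ x_n(t)). If the interaction graph is connected, d_V(t) > ε, and the minimum increases by at most d₀ at step t (where 0 < d₀ < ε/(2n²+2n+1)), then x_i(t) − x_{m(t)}(t) ≤ K(t)·d₀ for all i ≤ K(t), and agent K(t) increases its value by more than (K(t)+1)·d₀ at step t+1. -/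
/-
The HK update preserves the order of opinions, so agent 0 keeps the minimal opinion and its
average over its neighbours `0, …, K-1` exceeds `x₀` by at most `d₀`; since all these opinions
are `≥ x₀`, each of them exceeds `x₀` by at most `K d₀`. Connectivity gives an edge from
`{0, …, K-1}` to `{K, …}`, so `x_K ≤ x_{K-1} + ε`: agents `0, …, K` all neighbour agent `K-1`,
and its remaining neighbours lie higher. Hence `x'_{K-1}` is at least the mean of
`x_0, …, x_K`, which exceeds `x₀` by more than `ε/(K+1)` because `x_K > x₀ + ε`. Finally
`d₀ < ε/(2n²+2n+1)` makes `ε/(K+1) - K d₀` larger than `(K+1) d₀`.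
-/

open scoped Classical

open Finset
open scoped BigOperators

section Expect

variable {ι : Type*} {s t : Finset ι} {f : ι → ℝ}

theorem expect_le_expect_of_subset (hts : t ⊆ s) (ht : t.Nonempty)
    (h : ∀ a ∈ t, ∀ b ∈ s, b ∉ t → f a ≤ f b) : 𝔼 i ∈ t, f i ≤ 𝔼 i ∈ s, f i := by
  have hm : ∀ b ∈ s \ t, 𝔼 i ∈ t, f i ≤ f b := fun b hb =>
    expect_le ht fun a ha => h a ha b (mem_sdiff.1 hb).1 (mem_sdiff.1 hb).2
  have hs : (0 : ℝ) < #s := by exact_mod_cast (ht.mono hts).card_pos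
  refine le_of_mul_le_mul_left ?_ hs
  rw [card_mul_expect, ← sum_sdiff hts, ← card_sdiff_add_card_eq_card hts, Nat.cast_add, add_mul,
    card_mul_expect]
  gcongr
  simpa only [nsmul_eq_mul] using card_nsmul_le_sum _ _ _ hm

theorem expect_le_expect_of_superset (hts : t ⊆ s) (ht : t.Nonempty)
    (h : ∀ a ∈ t, ∀ b ∈ s, b ∉ t → f b ≤ f a) : 𝔼 i ∈ s, f i ≤ 𝔼 i ∈ t, f i := by
  simpa only [expect_neg_distrib, neg_le_neg_iff] using
    expect_le_expect_of_subset (f := fun i => -f i) hts ht fun a ha b hb hbt =>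
      neg_le_neg (h a ha b hb hbt)

theorem sub_le_card_mul_expect_sub {c : ℝ} {a : ι} (hc : ∀ b ∈ s, c ≤ f b) (ha : a ∈ s) :
    f a - c ≤ #s * (𝔼 i ∈ s, f i - c) := by
  rw [mul_sub, card_mul_expect, ← nsmul_eq_mul, ← sum_const, ← sum_sub_distrib]
  exact single_le_sum (f := fun i => f i - c) (fun b hb => sub_nonneg.2 (hc b hb)) ha

end Expect

theorem Relation.ReflTransGen.exists_rel_of_not {α : Type*} {r : α → α → Prop} {p : α → Prop}
    {a b : α} (h : ReflTransGen r a b) (ha : p a) (hb : ¬p b) :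
    ∃ u v, r u v ∧ p u ∧ ¬p v := by
  by_contra! hclosed
  induction h with
  | refl => exact hb ha
  | tail _ hcd ih => exact hb (hclosed _ _ hcd (by_contra ih))

section HK

variable {n : ℕ} {ε : ℝ} {x : Fin n → ℝ}

theorem hkAvg_eq_expect_s13 (i : Fin n) :
    hkAvg ε x i = 𝔼 j ∈ univ.filter fun j => |x j - x i| ≤ ε, x j :=
  (expect_eq_sum_div_card _ _).symm

-- Both neighbourhoods are compared with the average over the window `[x i - ε, x j + ε]`.
theorem hkAvg_le_hkAvg (hε : 0 ≤ ε) {i j : Fin n} (hij : x i ≤ x j) :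
    hkAvg ε x i ≤ hkAvg ε x j := by
  have hself : ∀ k, k ∈ univ.filter fun l => |x l - x k| ≤ ε := by simp [hε]
  rw [hkAvg_eq_expect_s13, hkAvg_eq_expect_s13]
  calc _ ≤ 𝔼 k ∈ univ.filter fun k => x i - ε ≤ x k ∧ x k ≤ x j + ε, x k := by
        refine expect_le_expect_of_subset ?_ ⟨i, hself i⟩ ?_ <;>
          simp only [mem_filter, mem_univ, true_and, abs_le, not_and_or, not_le] <;>
          intros <;> grind
    _ ≤ _ := by
        refine expect_le_expect_of_superset ?_ ⟨j, hself j⟩ ?_ <;>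
          simp only [mem_filter, mem_univ, true_and, abs_le, not_and_or, not_le] <;>
          intros <;> grind

theorem sub_le_mul_hkAvg_sub {i₀ b : Fin n} (hmin : ∀ j, x i₀ ≤ x j)
    (hK : ∀ j, |x j - x i₀| ≤ ε ↔ j < b) {j : Fin n} (hj : j < b) :
    x j - x i₀ ≤ (b : ℕ) * (hkAvg ε x i₀ - x i₀) := by
  have hN : (univ.filter fun l => |x l - x i₀| ≤ ε) = Iio b :=
    (filter_congr fun l _ => hK l).trans filter_gt_eq_Iio
  rw [hkAvg_eq_expect_s13, hN, ← Fin.card_Iio]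
  exact sub_le_card_mul_expect_sub (fun l _ => hmin l) (mem_Iio.2 hj)

theorem le_add_of_reflTransGen (hx : Monotone x) {i a b : Fin n} (hia : i ≤ a)
    (hb : (b : ℕ) = a + 1) (hconn : Relation.ReflTransGen (fun u v => |x u - x v| ≤ ε) i b) :
    x b ≤ x a + ε := by
  obtain ⟨u, v, huv, hu, hv⟩ :=
    hconn.exists_rel_of_not (p := (· ≤ a)) hia (by simp [Fin.le_def, hb])
  have hbv : x b ≤ x v := hx (Fin.le_def.2 (by rw [not_le, Fin.lt_def] at hv; omega))
  linarith [hx hu, (abs_le.1 huv).1]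

theorem lt_mul_hkAvg_sub (hx : Monotone x) {i₀ a b : Fin n} (hb : (b : ℕ) = a + 1)
    (hmin : ∀ j, x i₀ ≤ x j) (hK : ∀ j, |x j - x i₀| ≤ ε ↔ j < b) (hedge : x b ≤ x a + ε) :
    ε < ((b : ℕ) + 1) * (hkAvg ε x a - x i₀) := by
  have hband : ∀ j, j < b → x j ≤ x i₀ + ε := fun j hj => by linarith [(abs_le.1 ((hK j).2 hj)).2]
  have hab : a < b := Fin.lt_def.2 (by omega)
  have hfar : ε < x b - x i₀ := by
    have := (hK b).not.2 (lt_irrefl b)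
    rwa [abs_of_nonneg (sub_nonneg.2 (hmin b)), not_le] at this
  have hsub : Iic b ⊆ univ.filter fun j => |x j - x a| ≤ ε := by
    intro j hj
    rw [mem_filter, abs_le]
    rcases (mem_Iic.1 hj).lt_or_eq with hj | rfl
    · refine ⟨mem_univ j, ?_, ?_⟩ <;> linarith [hband j hj, hmin j, hband a hab, hmin a]
    · exact ⟨mem_univ j, by linarith [hx hab.le], by linarith⟩
  calc ε < x b - x i₀ := hfar
    _ ≤ #(Iic b) * (𝔼 j ∈ Iic b, x j - x i₀) :=
      sub_le_card_mul_expect_sub (fun j _ => hmin j) (mem_Iic.2 le_rfl)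
    _ ≤ ((b : ℕ) + 1) * (hkAvg ε x a - x i₀) := by
      rw [Fin.card_Iic, hkAvg_eq_expect_s13]
      push_cast
      gcongr
      exact expect_le_expect_of_subset hsub nonempty_Iic fun l hl j _ hj =>
        hx ((mem_Iic.1 hl).trans (not_le.1 (mt mem_Iic.2 hj)).le)

end HK

theorem add_one_mul_lt_sub {n K : ℕ} {ε d₀ a b c : ℝ} (hKn : K < n) (hd₀ : 0 < d₀)
    (hd₀' : d₀ < ε / (2 * (n : ℝ) ^ 2 + 2 * n + 1)) (ha : ε < (K + 1) * (a - c))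
    (hb : b - c ≤ K * d₀) : (K + 1) * d₀ < a - b := by
  have hKn' : (K : ℝ) + 1 ≤ n := by exact_mod_cast hKn
  have hε : (2 * (n : ℝ) ^ 2 + 2 * n + 1) * d₀ < ε := by
    rwa [lt_div_iff₀ (by positivity), mul_comm] at hd₀'
  have hquad : ((K : ℝ) + 1) * (2 * K + 1) ≤ 2 * (n : ℝ) ^ 2 + 2 * n + 1 := by
    nlinarith [(K.cast_nonneg : (0 : ℝ) ≤ K)]
  nlinarith [mul_le_mul_of_nonneg_right hquad hd₀.le, (K.cast_nonneg : (0 : ℝ) ≤ K)]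

/-- Agents sorted increasingly, with the minimal agent having exactly the first `K` agents
(1-indexed `1, …, K`) as neighbors.  If the `ε`-graph is connected, the diameter exceeds
`ε`, and the minimum increases by at most `d₀` at this step (with
`0 < d₀ < ε/(2n² + 2n + 1)`), then all neighbors of the minimal agent are within `K·d₀`
of it, and agent `K` (1-indexed; Fin-index `K-1`) increases by more than `(K+1)·d₀`. -/
theorem hk_min_agent_progress (n : ℕ) (ε d₀ : ℝ) (hε : 0 < ε)
    (K : ℕ) (hK1 : 1 ≤ K) (hKn : K < n)
    (hd₀ : 0 < d₀) (hd₀' : d₀ < ε / (2 * (n : ℝ) ^ 2 + 2 * n + 1))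
    (x x' : Fin n → ℝ)
    (hsorted : ∀ i j : Fin n, i ≤ j → x i ≤ x j)
    (hupd : ∀ i, x' i = hkAvg ε x i)
    (hKdef : ∀ j : Fin n, |x j - x ⟨0, by omega⟩| ≤ ε ↔ (j : ℕ) < K)
    (hconn : ∀ i j : Fin n, Relation.ReflTransGen (fun u v => |x u - x v| ≤ ε) i j)
    (hmin : (⨅ i, x' i) - x ⟨0, by omega⟩ ≤ d₀) :
    (∀ i : Fin n, (i : ℕ) < K → x i - x ⟨0, by omega⟩ ≤ (K : ℝ) * d₀) ∧
    ((K : ℝ) + 1) * d₀ < x' ⟨K - 1, by omega⟩ - x ⟨K - 1, by omega⟩ := by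
  have hx₀ : ∀ j, x ⟨0, by omega⟩ ≤ x j := fun j => hsorted _ _ (Fin.le_def.2 j.val.zero_le)
  have hstep : hkAvg ε x ⟨0, by omega⟩ - x ⟨0, by omega⟩ ≤ d₀ := by
    have : Nonempty (Fin n) := ⟨⟨0, by omega⟩⟩
    have : hkAvg ε x ⟨0, by omega⟩ ≤ ⨅ i, x' i :=
      le_ciInf fun i => (hupd i).symm ▸ hkAvg_le_hkAvg hε.le (hx₀ i)
    linarith
  have hclose : ∀ i : Fin n, (i : ℕ) < K → x i - x ⟨0, by omega⟩ ≤ (K : ℝ) * d₀ := fun i hi =>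
    (sub_le_mul_hkAvg_sub (b := ⟨K, hKn⟩) hx₀ hKdef hi).trans (by gcongr)
  refine ⟨hclose, ?_⟩
  have hb : K = (K - 1) + 1 := by omega
  have hedge := le_add_of_reflTransGen (a := ⟨K - 1, by omega⟩) (b := ⟨K, hKn⟩) hsorted
    (Fin.le_def.2 (Nat.zero_le _)) hb (hconn ⟨0, by omega⟩ _)
  rw [hupd]
  exact add_one_mul_lt_sub hKn hd₀ hd₀' (lt_mul_hkAvg_sub hsorted hb hx₀ hKdef hedge)
    (hclose _ (by show K - 1 < K; omega))
end
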